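/- Let $(a_n)$ be a nonincreasing sequence of positive reals, $(\theta_n)$ real numbers with $\theta_n \to \theta$ where $|\theta| > 0$, and suppose $\sqrt{n}\, a_n \to c > 0$. Define $T(\epsilon) = \inf\{n \geq 1 : a_n \leq \epsilon |\theta_n|\}$ for $\epsilon > 0$. Then $T(\epsilon)$ is finite for every $\epsilon > 0$ and $\epsilon \sqrt{T(\epsilon)} \to c/|\theta|$ as $\epsilon \to 0$. -/

import Mathlib

/-!
Write `r n = a n / |θₙ|`. Since `√n · r n → c / |θ|` and `r n → 0`, the stopping time `m = T ε`
is finite and tends to infinity as `ε → 0⁺`. By minimality `r m ≤ ε < r (m - 1)`, so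
`√m · r m ≤ ε √m < √m · r (m - 1)`, and both bounds tend to `c / |θ|` because `√m / √(m - 1) → 1`.
-/

open Filter Set Topology

lemma tendsto_zero_of_tendsto_sqrt_mul {a : ℕ → ℝ} {c : ℝ}
    (h : Tendsto (fun n : ℕ => √n * a n) atTop (𝓝 c)) : Tendsto a atTop (𝓝 0) := by
  refine (h.div_atTop (Real.tendsto_sqrt_atTop.comp tendsto_natCast_atTop_atTop)).congr' ?_
  filter_upwards [eventually_ge_atTop 1] with n hn
  have hn' : (0 : ℝ) < n := by exact_mod_cast hn
  simp only [Function.comp_apply]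
  field_simp

lemma eventually_le_mul_abs {a θseq : ℕ → ℝ} {θ ε : ℝ} (hθ : θ ≠ 0) (hε : 0 < ε)
    (ha : Tendsto a atTop (𝓝 0)) (hθconv : Tendsto θseq atTop (𝓝 θ)) :
    ∀ᶠ n in atTop, a n ≤ ε * |θseq n| :=
  (ha.eventually_lt (tendsto_const_nhds.mul hθconv.abs) (by positivity)).mono fun _ h => h.le

lemma Filter.Tendsto.sqrt_succ_mul {r : ℕ → ℝ} {L : ℝ}
    (hr : Tendsto (fun n : ℕ => √n * r n) atTop (𝓝 L)) :
    Tendsto (fun n : ℕ => √(n + 1) * r n) atTop (𝓝 L) := by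
  have hratio : Tendsto (fun n : ℕ => √(n / (n + 1))) atTop (𝓝 1) := by
    simpa using (tendsto_natCast_div_add_atTop (1 : ℝ)).sqrt
  have hquot := hr.div hratio one_ne_zero
  rw [div_one] at hquot
  refine hquot.congr' ?_
  filter_upwards [eventually_ge_atTop 1] with n hn
  have hn' : (0 : ℝ) < n := by exact_mod_cast hn
  rw [Pi.div_apply, Real.sqrt_div' _ (by positivity : (0:ℝ) ≤ n + 1)]
  field_simp

lemma tendsto_sInf_atTop {ι : Type*} {l : Filter ι} {S : ι → Set ℕ}
    (hne : ∀ᶠ i in l, (S i).Nonempty) (hnotMem : ∀ n, ∀ᶠ i in l, n ∉ S i) :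
    Tendsto (fun i => sInf (S i)) l atTop := by
  refine tendsto_atTop.2 fun N => ?_
  have hsmall : ∀ᶠ i in l, ∀ n ∈ Finset.range N, n ∉ S i :=
    (eventually_all_finset _).2 fun n _ => hnotMem n
  filter_upwards [hne, hsmall] with i hi hsmall
  by_contra! h
  exact hsmall _ (Finset.mem_range.2 h) (Nat.sInf_mem hi)

lemma tendsto_mul_sqrt_of_le_of_lt {ι : Type*} {l : Filter ι} {r : ℕ → ℝ} {L : ℝ}
    {ε : ι → ℝ} {T : ι → ℕ}
    (hr : Tendsto (fun n : ℕ => √n * r n) atTop (𝓝 L)) (hT : Tendsto T l atTop)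
    (hle : ∀ᶠ i in l, r (T i) ≤ ε i) (hlt : ∀ᶠ i in l, ε i < r (T i - 1)) :
    Tendsto (fun i => ε i * √(T i)) l (𝓝 L) := by
  have hlower := hr.comp hT
  have hupper := hr.sqrt_succ_mul.comp ((tendsto_sub_atTop_nat 1).comp hT)
  refine tendsto_of_tendsto_of_tendsto_of_le_of_le' hlower hupper ?_ ?_
  · filter_upwards [hle] with i hi
    simpa [mul_comm] using mul_le_mul_of_nonneg_left hi (Real.sqrt_nonneg (T i))
  · filter_upwards [hlt, hT.eventually_ge_atTop 1] with i hi hTi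
    have hcast : ((T i - 1 : ℕ) : ℝ) + 1 = T i := by push_cast [Nat.cast_sub hTi]; ring
    simp only [Function.comp_apply, hcast]
    rw [mul_comm]
    exact mul_le_mul_of_nonneg_left hi.le (Real.sqrt_nonneg _)

theorem relative_magnitude_stopping_rule_general
    (a : ℕ → ℝ) (θseq : ℕ → ℝ) (θ c : ℝ) (hθ : 0 < |θ|)
    (ha : ∀ n, 0 < a n)
    (hconva : Tendsto (fun n : ℕ => Real.sqrt n * a n) atTop (nhds c))
    (hθconv : Tendsto θseq atTop (nhds θ))
    (T : ℝ → ℕ) (hT : ∀ ε, T ε = sInf {n : ℕ | 1 ≤ n ∧ a n ≤ ε * |θseq n|}) :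
    (∀ ε > (0:ℝ), {n : ℕ | 1 ≤ n ∧ a n ≤ ε * |θseq n|}.Nonempty) ∧
    Tendsto (fun ε => ε * Real.sqrt (T ε)) (nhdsWithin 0 (Set.Ioi 0)) (nhds (c / |θ|)) := by
  have hne : ∀ ε > (0:ℝ), {n : ℕ | 1 ≤ n ∧ a n ≤ ε * |θseq n|}.Nonempty := fun ε hε =>
    ((eventually_ge_atTop 1).and (eventually_le_mul_abs (abs_pos.1 hθ) hε
      (tendsto_zero_of_tendsto_sqrt_mul hconva) hθconv)).exists
  have hTtop : Tendsto T (𝓝[>] 0) atTop := by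
    simp only [funext hT]
    refine tendsto_sInf_atTop (eventually_mem_nhdsWithin.mono hne) fun n => ?_
    have hsmall : Tendsto (fun ε : ℝ => ε * |θseq n|) (𝓝 0) (𝓝 (0 * |θseq n|)) :=
      tendsto_id.mul_const _
    rw [zero_mul] at hsmall
    filter_upwards [(hsmall.mono_left nhdsWithin_le_nhds).eventually_lt_const (ha n)]
      with ε hε hn using hε.not_ge hn.2
  have hθpos : ∀ᶠ ε in 𝓝[>] 0, 0 < |θseq (T ε - 1)| :=
    ((tendsto_sub_atTop_nat 1).comp hTtop).eventually (hθconv.abs.eventually_const_lt hθ)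
  refine ⟨hne, tendsto_mul_sqrt_of_le_of_lt (r := fun n => a n / |θseq n|)
    ((hconva.div hθconv.abs hθ.ne').congr fun n => mul_div_assoc _ _ _) hTtop ?_ ?_⟩
  · filter_upwards [eventually_mem_nhdsWithin] with ε hε
    exact div_le_of_le_mul₀ (abs_nonneg _) (le_of_lt hε) (hT ε ▸ Nat.sInf_mem (hne ε hε)).2
  · filter_upwards [eventually_mem_nhdsWithin, hθpos, hTtop.eventually_ge_atTop 2]
      with ε hε hθε hTε
    have hprev : T ε - 1 ∉ {n : ℕ | 1 ≤ n ∧ a n ≤ ε * |θseq n|} :=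
      Nat.notMem_of_lt_sInf (hT ε ▸ by omega)
    rw [lt_div_iff₀ hθε]
    simp only [mem_ofPred_eq, not_and, not_le] at hprev
    exact hprev (by omega)

theorem relative_magnitude_stopping_rule
    (a : ℕ → ℝ) (θseq : ℕ → ℝ) (θ c : ℝ) (hc : 0 < c) (hθ : 0 < |θ|)
    (ha : ∀ n, 0 < a n) (hmono : Antitone a)
    (hconva : Tendsto (fun n : ℕ => Real.sqrt n * a n) atTop (nhds c))
    (hθconv : Tendsto θseq atTop (nhds θ))
    (T : ℝ → ℕ) (hT : ∀ ε, T ε = sInf {n : ℕ | 1 ≤ n ∧ a n ≤ ε * |θseq n|}) :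
    (∀ ε > (0:ℝ), {n : ℕ | 1 ≤ n ∧ a n ≤ ε * |θseq n|}.Nonempty) ∧
    Tendsto (fun ε => ε * Real.sqrt (T ε)) (nhdsWithin 0 (Set.Ioi 0)) (nhds (c / |θ|)) :=
  relative_magnitude_stopping_rule_general a θseq θ c hθ ha hconva hθconv T hT
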